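/- arXiv:2512.21744 — 2 statements merged into one kernel-verified Lean document; each statement's English description precedes it below -/
import Mathlib

section
/- Let n ≥ 2, let A be a real n×n singular irreducible M-matrix, and let L_G and U_G be the FSAI factors associated with the complete patterns S_L = {(i,j) : i ≥ j} \ {(n,n−1)} and S_U = {(i,j) : i ≤ j} \ {(n−1,n)}. With d_i = (L_G A U_G)_{ii} and D^− = diag(d_1^{−1}, …, d_{n−1}^{−1}, 0), the matrix Â = U_G D^− L_G is a (1,2)-inverse of A, that is, A Â A = A and Â A Â = Â. -/
open Matrix

/-- The spectral radius of a real matrix: the maximum modulus of its complex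
eigenvalues (supremum of moduli of elements of the complex spectrum). -/
noncomputable def specRad {n : ℕ} (B : Matrix (Fin n) (Fin n) ℝ) : ℝ :=
  sSup ((fun z : ℂ => ‖z‖) '' spectrum ℂ (B.map Complex.ofReal))

/-- A real square matrix is a Z-matrix if its off-diagonal entries are nonpositive. -/
def IsZMatrix {n : ℕ} (A : Matrix (Fin n) (Fin n) ℝ) : Prop :=
  ∀ i j, i ≠ j → A i j ≤ 0

/-- A Z-matrix `A` is a nonsingular M-matrix if `A = s • 1 - B` with `B`
entrywise nonnegative and `s > ρ(B)`. -/
def IsNonsingularMMatrix {n : ℕ} (A : Matrix (Fin n) (Fin n) ℝ) : Prop :=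
  IsZMatrix A ∧ ∃ (s : ℝ) (B : Matrix (Fin n) (Fin n) ℝ),
    (∀ i j, 0 ≤ B i j) ∧ specRad B < s ∧ A = s • (1 : Matrix (Fin n) (Fin n) ℝ) - B

/-- A Z-matrix `A` is a singular M-matrix if `A = ρ(B) • 1 - B` with `B`
entrywise nonnegative. -/
def IsSingularMMatrix {n : ℕ} (A : Matrix (Fin n) (Fin n) ℝ) : Prop :=
  IsZMatrix A ∧ ∃ B : Matrix (Fin n) (Fin n) ℝ,
    (∀ i j, 0 ≤ B i j) ∧ A = specRad B • (1 : Matrix (Fin n) (Fin n) ℝ) - B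

/-- A matrix is irreducible if its directed graph (edge `i → j` iff `A i j ≠ 0`)
is strongly connected. -/
def IsIrreducibleMatrix {n : ℕ} (A : Matrix (Fin n) (Fin n) ℝ) : Prop :=
  ∀ i j : Fin n, Relation.ReflTransGen (fun a b : Fin n => A a b ≠ 0) i j

/-- Lower triangular real matrix. -/
def IsLowerTri {n : ℕ} (L : Matrix (Fin n) (Fin n) ℝ) : Prop :=
  ∀ i j : Fin n, i < j → L i j = 0

/-- Upper triangular real matrix. -/
def IsUpperTri {n : ℕ} (U : Matrix (Fin n) (Fin n) ℝ) : Prop :=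
  ∀ i j : Fin n, j < i → U i j = 0

/-- `L` is an FSAI lower triangular factor of `A` for the pattern `S`:
`L` is lower triangular, vanishes off the pattern, and `(L * A) i j = δ i j`
on the pattern. -/
def IsFSAILowerFactor {n : ℕ} (A L : Matrix (Fin n) (Fin n) ℝ)
    (S : Set (Fin n × Fin n)) : Prop :=
  IsLowerTri L ∧ (∀ p : Fin n × Fin n, p ∉ S → L p.1 p.2 = 0) ∧
    ∀ p : Fin n × Fin n, p ∈ S → (L * A) p.1 p.2 = if p.1 = p.2 then 1 else 0

/-- `U` is an FSAI upper triangular factor of `A` for the pattern `S`: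
`U` is upper triangular, vanishes off the pattern, and `(A * U) i j = δ i j`
on the pattern. -/
def IsFSAIUpperFactor {n : ℕ} (A U : Matrix (Fin n) (Fin n) ℝ)
    (S : Set (Fin n × Fin n)) : Prop :=
  IsUpperTri U ∧ (∀ p : Fin n × Fin n, p ∉ S → U p.1 p.2 = 0) ∧
    ∀ p : Fin n × Fin n, p ∈ S → (A * U) p.1 p.2 = if p.1 = p.2 then 1 else 0


/-!
Write `A = ρ(B) • 1 - B` with `B ≥ 0` irreducible. Perron–Frobenius theory for `B`, which rests on
the Collatz–Wielandt bound and thus on Gelfand's formula, shows that `A` is singular while every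
proper principal submatrix of `A` is nonsingular. The latter forces the diagonals of `L_G` and
`U_G` to be nonzero, so both factors are invertible.

The FSAI conditions make `M = L_G A U_G` diagonal apart from the entries `(n, n-1)` and
`(n-1, n)`, with `M_ii = (L_G)_ii ≠ 0` for `i < n`. As `M` is singular, its trailing `2 × 2`
block has zero determinant, and a direct computation gives `M D⁻ M = M` and `D⁻ M D⁻ = D⁻`.
Undoing the invertible factors `L_G`, `U_G` yields `A Â A = A` and `Â A Â = Â`.
-/

open Filter Topology

section PrincipalSubmatrix

variable {ι R : Type*} [Fintype ι]

def ProperPrincipalMinorsNeZero [DecidableEq ι] [CommRing R] (A : Matrix ι ι R) : Prop :=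
  ∀ s : Finset ι, s ≠ Finset.univ → (A.submatrix ((↑) : s → ι) (↑)).det ≠ 0

theorem ProperPrincipalMinorsNeZero.transpose [DecidableEq ι] [CommRing R] {A : Matrix ι ι R}
    (hA : ProperPrincipalMinorsNeZero A) : ProperPrincipalMinorsNeZero Aᵀ := fun s hs => by
  rw [← transpose_submatrix, det_transpose]
  exact hA s hs

theorem submatrix_mulVec_comp_coe [NonUnitalNonAssocSemiring R] (M : Matrix ι ι R)
    {s : Finset ι} {v : ι → R} (hv : ∀ i ∉ s, v i = 0) (i : s) :
    (M.submatrix (↑) (↑) *ᵥ (v ∘ ((↑) : s → ι))) i = (M *ᵥ v) i := by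
  simp only [mulVec, dotProduct, submatrix_apply, Function.comp_apply]
  rw [Finset.sum_coe_sort s (fun j => M i j * v j)]
  exact Finset.sum_subset (Finset.subset_univ s) fun j _ hj => by rw [hv j hj, mul_zero]

theorem eq_zero_of_vecMul_eq_zero_on [DecidableEq ι] [CommRing R] [NoZeroDivisors R]
    {A : Matrix ι ι R} {s : Finset ι} (hA : (A.submatrix ((↑) : s → ι) (↑)).det ≠ 0)
    {v : ι → R} (hv : ∀ i ∉ s, v i = 0) (hvA : ∀ j ∈ s, (v ᵥ* A) j = 0) : v = 0 := by
  have hrestr : (v ∘ ((↑) : s → ι)) ᵥ* A.submatrix ((↑) : s → ι) ((↑) : s → ι) = 0 := by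
    funext j
    rw [← mulVec_transpose, transpose_submatrix, submatrix_mulVec_comp_coe _ hv,
      mulVec_transpose, Pi.zero_apply, hvA j j.2]
  funext i
  by_cases hi : i ∈ s
  · exact congrFun (eq_zero_of_vecMul_eq_zero hA hrestr) ⟨i, hi⟩
  · exact hv i hi

end PrincipalSubmatrix

def IsDiagonalBut {ι R : Type*} [Zero R] (M : Matrix ι ι R) (p q : ι) : Prop :=
  ∀ i j, i ≠ j → s(i, j) ≠ s(p, q) → M i j = 0

/-- The matrix `D⁻` of the paper. -/
def diagInvExcept {ι K : Type*} [DecidableEq ι] [DivisionRing K] (M : Matrix ι ι K) (p : ι) :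
    Matrix ι ι K :=
  diagonal fun i => if i = p then 0 else (M i i)⁻¹

section DiagonalBut

variable {ι R : Type*} [NonUnitalNonAssocSemiring R] {M : Matrix ι ι R} {p q : ι}

theorem IsDiagonalBut.symm (hM : IsDiagonalBut M p q) : IsDiagonalBut M q p :=
  fun i j hij h => hM i j hij (by rwa [Sym2.eq_swap (a := q)] at h)

variable [Fintype ι]

theorem IsDiagonalBut.mulVec_apply_of_ne (hM : IsDiagonalBut M p q) {i : ι} (hip : i ≠ p)
    (hiq : i ≠ q) (v : ι → R) : (M *ᵥ v) i = M i i * v i :=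
  Fintype.sum_eq_single i fun j hji =>
    mul_eq_zero_of_left (hM i j (Ne.symm hji) (by simp [hip, hiq])) (v j)

theorem IsDiagonalBut.mulVec_apply_left (hM : IsDiagonalBut M p q) (hpq : p ≠ q) (v : ι → R) :
    (M *ᵥ v) p = M p p * v p + M p q * v q :=
  Fintype.sum_eq_add p q hpq fun j ⟨hjp, hjq⟩ =>
    mul_eq_zero_of_left (hM p j (Ne.symm hjp) (by simp [hjq, hpq])) (v j)

end DiagonalBut

section DiagonalButField

variable {ι K : Type*} [Fintype ι] [DecidableEq ι] [Field K] {M : Matrix ι ι K} {p q : ι}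

theorem IsDiagonalBut.mul_eq_mul_of_det_eq_zero (hM : IsDiagonalBut M p q)
    (hpq : p ≠ q) (hd : ∀ i ≠ p, M i i ≠ 0) (hdet : M.det = 0) :
    M p p * M q q = M p q * M q p := by
  obtain ⟨w, hw0, hw⟩ := exists_mulVec_eq_zero_iff.2 hdet
  have hrow : ∀ i, (M *ᵥ w) i = 0 := congrFun hw
  have hp := hM.mulVec_apply_left hpq w ▸ hrow p
  have hq := hM.symm.mulVec_apply_left hpq.symm w ▸ hrow q
  have hwp : w p ≠ 0 := fun hwp => hw0 <| funext fun i => by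
    have hwq : w q = 0 := by simpa [hwp, hd q hpq.symm] using hq
    by_cases hip : i = p
    · rwa [hip]
    by_cases hiq : i = q
    · rwa [hiq]
    simpa [hM.mulVec_apply_of_ne hip hiq, hd i hip] using hrow i
  refine mul_right_cancel₀ hwp (sub_eq_zero.1 ?_)
  linear_combination M q q * hp - M p q * hq

theorem IsDiagonalBut.diagInvExcept_mul_mul_diagInvExcept
    (hM : IsDiagonalBut M p q) : diagInvExcept M p * M * diagInvExcept M p = diagInvExcept M p := by
  ext i j
  rw [diagInvExcept, mul_diagonal, diagonal_mul]
  by_cases hij : i = j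
  · subst hij
    by_cases hip : i = p
    · simp [hip]
    · simpa [hip] using mul_inv_mul_cancel (M i i)⁻¹
  · rw [diagonal_apply_ne _ hij]
    by_cases h : s(i, j) = s(p, q)
    · rcases Sym2.eq_iff.1 h with ⟨rfl, -⟩ | ⟨-, rfl⟩ <;> simp
    · rw [hM i j hij h]; ring

theorem IsDiagonalBut.mul_diagInvExcept_mul_self (hM : IsDiagonalBut M p q)
    (hpq : p ≠ q) (hd : ∀ i ≠ p, M i i ≠ 0) (hblock : M p p * M q q = M p q * M q p) :
    M * diagInvExcept M p * M = M := by
  rw [diagInvExcept]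
  set d : ι → K := fun i => if i = p then 0 else (M i i)⁻¹
  have hdp : d p = 0 := if_pos rfl
  have hd' : ∀ i ≠ p, d i = (M i i)⁻¹ := fun i hi => if_neg hi
  ext i j
  rw [mul_apply]
  simp only [mul_diagonal]
  -- in row `i`, only the column `k₀` of `M * D⁻` can be nonzero
  set k₀ := if i = p then q else i
  rw [Fintype.sum_eq_single k₀ fun k hk => ?_]
  · by_cases hip : i = p
    · simp only [k₀, if_pos hip]
      subst i
      rw [hd' q hpq.symm]
      have hq := hd q hpq.symm
      by_cases hjp : j = p
      · rw [hjp]; field_simp; linear_combination -hblock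
      by_cases hjq : j = q
      · rw [hjq]; field_simp
      rw [hM q j (Ne.symm hjq) (by simp [hjp, hpq.symm]),
        hM p j (Ne.symm hjp) (by simp [hjq, hpq]), mul_zero]
    · simp only [k₀, if_neg hip]
      rw [hd' i hip]
      field_simp [hd i hip]
  · have : M i k * d k = 0 := by
      by_cases hkp : k = p
      · rw [hkp, hdp, mul_zero]
      refine mul_eq_zero_of_left (hM i k (fun hik => hk ?_) fun h => ?_) _
      · subst hik; simp [k₀, hkp]
      · rcases Sym2.eq_iff.1 h with ⟨hip, hkq⟩ | ⟨-, hkp'⟩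
        · exact hk (by simp [k₀, hip, hkq])
        · exact hkp hkp'
    rw [this, zero_mul]

end DiagonalButField

section Nonneg

variable {ι : Type*} [Fintype ι] {B : Matrix ι ι ℝ}

theorem norm_mul_norm_le_mulVec_norm {𝕜 : Type*} [RCLike 𝕜] (hB : ∀ i j, 0 ≤ B i j)
    {v : ι → 𝕜} {z : 𝕜} {i : ι} (h : (B.map (algebraMap ℝ 𝕜) *ᵥ v) i = z * v i) :
    ‖z‖ * ‖v i‖ ≤ (B *ᵥ fun j => ‖v j‖) i := by
  rw [← norm_mul, ← h]
  refine (norm_sum_le _ _).trans_eq (Finset.sum_congr rfl fun j _ => ?_)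
  dsimp only
  rw [norm_mul, map_apply, norm_algebraMap', Real.norm_of_nonneg (hB i j)]

theorem mulVec_mono_of_nonneg (hB : ∀ i j, 0 ≤ B i j) {x y : ι → ℝ} (h : x ≤ y) :
    B *ᵥ x ≤ B *ᵥ y :=
  fun i => dotProduct_le_dotProduct_of_nonneg_left h (hB i)

theorem mulVec_pos_of_pos {E : Matrix ι ι ℝ} (hE : ∀ i j, 0 < E i j) {y : ι → ℝ} (hy : 0 ≤ y)
    (hy0 : y ≠ 0) (i : ι) : 0 < (E *ᵥ y) i := by
  obtain ⟨j, hj⟩ := Function.ne_iff.1 hy0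
  exact Finset.sum_pos' (fun t _ => mul_nonneg (hE i t).le (hy t))
    ⟨j, Finset.mem_univ j, mul_pos (hE i j) ((hy j).lt_of_ne' hj)⟩

theorem apply_mul_apply_le_mul_apply {P Q : Matrix ι ι ℝ} (hP : ∀ i j, 0 ≤ P i j)
    (hQ : ∀ i j, 0 ≤ Q i j) (i t j : ι) : P i t * Q t j ≤ (P * Q) i j :=
  Finset.single_le_sum (f := fun t => P i t * Q t j)
    (fun t _ => mul_nonneg (hP i t) (hQ t j)) (Finset.mem_univ t)

variable [DecidableEq ι]

theorem pow_smul_le_pow_mulVec (hB : ∀ i j, 0 ≤ B i j) {w : ι → ℝ} {c : ℝ} (hc : 0 ≤ c)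
    (hcw : c • w ≤ B *ᵥ w) (k : ℕ) : c ^ k • w ≤ B ^ k *ᵥ w := by
  induction k with
  | zero => simp
  | succ k ih =>
    calc c ^ (k + 1) • w = c ^ k • (c • w) := by rw [pow_succ, mul_smul]
      _ ≤ c ^ k • (B *ᵥ w) := smul_le_smul_of_nonneg_left hcw (pow_nonneg hc k)
      _ = B *ᵥ (c ^ k • w) := (mulVec_smul B _ w).symm
      _ ≤ B *ᵥ (B ^ k *ᵥ w) := mulVec_mono_of_nonneg hB ih
      _ = B ^ (k + 1) *ᵥ w := by rw [mulVec_mulVec, pow_succ']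

theorem one_add_pow_mulVec_of_mulVec_eq_smul {y : ι → ℝ} {r : ℝ} (h : B *ᵥ y = r • y)
    (N : ℕ) : (1 + B) ^ N *ᵥ y = (1 + r) ^ N • y := by
  induction N with
  | zero => simp
  | succ N ih =>
    rw [pow_succ', ← mulVec_mulVec, ih, mulVec_smul, add_mulVec, one_mulVec, h]
    module

end Nonneg

theorem exists_pos_smul_le {ι : Type*} [Finite ι] (w : ι → ℝ) {v : ι → ℝ} (hv : ∀ i, 0 < v i) :
    ∃ ε : ℝ, 0 < ε ∧ ε • w ≤ v := by
  have hsmall : ∀ᶠ ε in 𝓝[>] (0 : ℝ), ∀ i, ε * w i < v i :=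
    eventually_all.2 fun i => nhdsWithin_le_nhds <|
      ((continuous_mul_const (w i)).tendsto' 0 0 (zero_mul _)).eventually (gt_mem_nhds (hv i))
  obtain ⟨ε, hε, hε0⟩ := (hsmall.and self_mem_nhdsWithin).exists
  exact ⟨ε, hε0, fun i => (hε i).le⟩

theorem IsIrreducibleMatrix.mono {n : ℕ} {A B : Matrix (Fin n) (Fin n) ℝ}
    (hA : IsIrreducibleMatrix A) (h : ∀ i j, i ≠ j → A i j ≠ 0 → B i j ≠ 0) :
    IsIrreducibleMatrix B := fun i j =>
  Relation.ReflTransGen.lift' id (fun a b hab => by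
    by_cases hab' : a = b
    · exact hab' ▸ Relation.ReflTransGen.refl
    · exact Relation.ReflTransGen.single (h a b hab' hab)) i j (hA i j)

section SpectralRadius

variable {m : ℕ} {B : Matrix (Fin m) (Fin m) ℝ}

theorem specRad_nonneg (B : Matrix (Fin m) (Fin m) ℝ) : 0 ≤ specRad B :=
  Real.sSup_nonneg <| by rintro _ ⟨z, -, rfl⟩; exact norm_nonneg z

theorem norm_le_specRad {z : ℂ} (hz : z ∈ spectrum ℂ (B.map Complex.ofReal)) :
    ‖z‖ ≤ specRad B :=
  le_csSup ((Matrix.finite_spectrum _).image _).bddAbove ⟨z, hz, rfl⟩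

theorem exists_norm_eq_specRad [NeZero m] (B : Matrix (Fin m) (Fin m) ℝ) :
    ∃ z ∈ spectrum ℂ (B.map Complex.ofReal), ‖z‖ = specRad B :=
  ((spectrum.nonempty_of_isAlgClosed_of_finiteDimensional ℂ _).image _).csSup_mem
    ((Matrix.finite_spectrum _).image _)

attribute [local instance] Matrix.linftyOpNormedRing Matrix.linftyOpNormedAlgebra in
theorem le_specRad_of_smul_le_mulVec [NeZero m] (hB : ∀ i j, 0 ≤ B i j) {w : Fin m → ℝ}
    (hw : ∀ i, 0 < w i) {c : ℝ} (hcw : c • w ≤ B *ᵥ w) : c ≤ specRad B := by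
  -- For `ρ(B) < c' < c`, Gelfand's formula gives `‖Bᵏ‖ < c'ᵏ` eventually,
  -- whereas `Bᵏ w ≥ cᵏ w` forces `‖Bᵏ‖` to grow like `cᵏ`.
  by_contra! hlt
  obtain ⟨c', hρc', hc'c⟩ := exists_between hlt
  have hc' : 0 < c' := (specRad_nonneg B).trans_lt hρc'
  set C := B.map Complex.ofReal
  have hρ : spectralRadius ℂ C < ENNReal.ofReal c' := by
    refine lt_of_le_of_lt (iSup₂_le fun z hz => ?_) ((ENNReal.ofReal_lt_ofReal_iff hc').2 hρc')
    rw [← ENNReal.ofReal_coe_nnreal, coe_nnnorm]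
    exact ENNReal.ofReal_le_ofReal (norm_le_specRad hz)
  have hupper : ∀ᶠ k : ℕ in atTop, ‖C ^ k‖ < c' ^ k := by
    filter_upwards [(spectrum.pow_norm_pow_one_div_tendsto_nhds_spectralRadius C).eventually
      (gt_mem_nhds hρ), eventually_ne_atTop 0] with k hk hk0
    rw [ENNReal.ofReal_lt_ofReal_iff hc', one_div] at hk
    calc ‖C ^ k‖ = (‖C ^ k‖ ^ (k⁻¹ : ℝ)) ^ k :=
          (Real.rpow_inv_natCast_pow (norm_nonneg _) hk0).symm
      _ < c' ^ k := pow_lt_pow_left₀ hk (by positivity) hk0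
  set v : Fin m → ℂ := Complex.ofReal ∘ w
  have hlower : ∀ k, c ^ k * w 0 ≤ ‖C ^ k‖ * ‖v‖ := by
    intro k
    have hCk : C ^ k = (B ^ k).map Complex.ofReal :=
      (map_pow Complex.ofRealHom.mapMatrix B k).symm
    have hCkv : (C ^ k *ᵥ v) 0 = ((B ^ k *ᵥ w) 0 : ℂ) := by
      rw [hCk]; exact (RingHom.map_mulVec Complex.ofRealHom _ w 0).symm
    calc c ^ k * w 0 ≤ (B ^ k *ᵥ w) 0 :=
          pow_smul_le_pow_mulVec hB (hc'.trans hc'c).le hcw k 0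
      _ ≤ ‖(C ^ k *ᵥ v) 0‖ := by
          rw [hCkv, Complex.norm_real, Real.norm_eq_abs]; exact le_abs_self _
      _ ≤ ‖C ^ k *ᵥ v‖ := norm_le_pi_norm _ 0
      _ ≤ ‖C ^ k‖ * ‖v‖ := Matrix.linfty_opNorm_mulVec _ _
  have hgrowth := (tendsto_pow_atTop_atTop_of_one_lt ((one_lt_div hc').2 hc'c)).eventually_gt_atTop
    (‖v‖ / w 0)
  obtain ⟨k, hCk, hk⟩ := (hupper.and hgrowth).exists
  rw [div_pow, div_lt_div_iff₀ (hw 0) (pow_pos hc' k)] at hk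
  nlinarith [hlower k, mul_le_mul_of_nonneg_right hCk.le (norm_nonneg v)]

theorem exists_nonneg_smul_le_mulVec [NeZero m] (hB : ∀ i j, 0 ≤ B i j) :
    ∃ y : Fin m → ℝ, 0 ≤ y ∧ y ≠ 0 ∧ specRad B • y ≤ B *ᵥ y := by
  obtain ⟨z, hz, hzρ⟩ := exists_norm_eq_specRad B
  rw [← Matrix.spectrum_toLin'] at hz
  obtain ⟨v, hv⟩ := (Module.End.hasEigenvalue_iff_mem_spectrum.2 hz).exists_hasEigenvector
  refine ⟨fun j => ‖v j‖, fun j => norm_nonneg _, fun h => hv.2 (funext fun j => ?_),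
    fun i => ?_⟩
  · simpa using congrFun h j
  · rw [Pi.smul_apply, smul_eq_mul, ← hzρ]
    exact norm_mul_norm_le_mulVec_norm hB (by simpa using congrFun hv.apply_eq_smul i)

end SpectralRadius

section PerronFrobenius

variable {m : ℕ} {B : Matrix (Fin m) (Fin m) ℝ}

theorem exists_one_add_pow_pos (hB : ∀ i j, 0 ≤ B i j) (hirr : IsIrreducibleMatrix B) :
    ∃ N, ∀ i j, 0 < ((1 + B) ^ N : Matrix (Fin m) (Fin m) ℝ) i j := by
  have h1 : ∀ i j, 0 ≤ (1 : Matrix (Fin m) (Fin m) ℝ) i j := fun i j => by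
    rw [one_apply]; split_ifs <;> norm_num
  have hP : ∀ i j, 0 ≤ (1 + B) i j := fun i j => add_nonneg (h1 i j) (hB i j)
  have hmono : ∀ i j, Monotone fun k => ((1 + B) ^ k : Matrix (Fin m) (Fin m) ℝ) i j :=
    fun i j => monotone_nat_of_le_succ fun k => by
      rw [pow_succ]
      refine le_trans ?_ (apply_mul_apply_le_mul_apply (pow_apply_nonneg hP k) hP i j j)
      exact le_mul_of_one_le_right (pow_apply_nonneg hP k i j) (by simpa using hB j j)
  have hpath : ∀ i j, ∀ᶠ k in atTop, 0 < ((1 + B) ^ k : Matrix (Fin m) (Fin m) ℝ) i j := by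
    intro i j
    induction hirr i j with
    | refl => exact .of_forall fun k => zero_lt_one.trans_le (by simpa using hmono i i k.zero_le)
    | @tail b c _ hbc ih =>
      obtain ⟨ℓ, hℓ⟩ := eventually_atTop.1 ih
      refine eventually_atTop.2 ⟨ℓ + 1, fun k hk => ?_⟩
      calc 0 < ((1 + B) ^ ℓ) i b * (1 + B) b c :=
            mul_pos (hℓ ℓ le_rfl) (add_pos_of_nonneg_of_pos (h1 b c) ((hB b c).lt_of_ne' hbc))
        _ ≤ ((1 + B) ^ (ℓ + 1)) i c := by
          rw [pow_succ]; exact apply_mul_apply_le_mul_apply (pow_apply_nonneg hP ℓ) hP i b c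
        _ ≤ ((1 + B) ^ k) i c := hmono i c hk
  exact (eventually_all.2 fun i => eventually_all.2 (hpath i)).exists

theorem pos_of_mulVec_eq_smul (hB : ∀ i j, 0 ≤ B i j) (hirr : IsIrreducibleMatrix B)
    {y : Fin m → ℝ} (hy : 0 ≤ y) (hy0 : y ≠ 0) {r : ℝ} (hr : 0 ≤ r) (h : B *ᵥ y = r • y)
    (i : Fin m) : 0 < y i := by
  obtain ⟨N, hE⟩ := exists_one_add_pow_pos hB hirr
  have := mulVec_pos_of_pos hE hy hy0 i
  rw [one_add_pow_mulVec_of_mulVec_eq_smul h, Pi.smul_apply, smul_eq_mul] at this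
  exact pos_of_mul_pos_right this (by positivity)

theorem mulVec_eq_specRad_smul_of_le [NeZero m] (hB : ∀ i j, 0 ≤ B i j)
    (hirr : IsIrreducibleMatrix B) {y : Fin m → ℝ} (hy : 0 ≤ y) (hy0 : y ≠ 0)
    (hρy : specRad B • y ≤ B *ᵥ y) : B *ᵥ y = specRad B • y := by
  -- Otherwise `E = (1 + B) ^ N > 0` turns `y` into `w = E y > 0` with `B w ≥ (ρ(B) + ε) w`.
  by_contra hne
  obtain ⟨N, hE⟩ := exists_one_add_pow_pos hB hirr
  set E : Matrix (Fin m) (Fin m) ℝ := (1 + B) ^ N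
  set z := B *ᵥ y - specRad B • y
  have hz : 0 ≤ z := sub_nonneg.2 hρy
  have hz0 : z ≠ 0 := sub_ne_zero.2 hne
  have hcomm : B * E = E * B := ((Commute.one_right B).add_right (Commute.refl B)).pow_right N
  have hBw : B *ᵥ (E *ᵥ y) = specRad B • (E *ᵥ y) + E *ᵥ z := by
    rw [mulVec_mulVec, hcomm, ← mulVec_mulVec, mulVec_sub, mulVec_smul, add_sub_cancel]
  obtain ⟨ε, hε, hεw⟩ := exists_pos_smul_le (E *ᵥ y) (mulVec_pos_of_pos hE hz hz0)
  have := le_specRad_of_smul_le_mulVec hB (mulVec_pos_of_pos hE hy hy0) (c := specRad B + ε)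
    (by rw [hBw, add_smul]; gcongr)
  linarith

theorem det_specRad_smul_one_sub_eq_zero [NeZero m] (hB : ∀ i j, 0 ≤ B i j)
    (hirr : IsIrreducibleMatrix B) : (specRad B • 1 - B).det = 0 := by
  obtain ⟨y, hy, hy0, hρy⟩ := exists_nonneg_smul_le_mulVec hB
  refine exists_mulVec_eq_zero_iff.1 ⟨y, hy0, ?_⟩
  rw [sub_mulVec, smul_mulVec, one_mulVec, mulVec_eq_specRad_smul_of_le hB hirr hy hy0 hρy,
    sub_self]

theorem properPrincipalMinorsNeZero_specRad_smul_one_sub (hB : ∀ i j, 0 ≤ B i j)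
    (hirr : IsIrreducibleMatrix B) : ProperPrincipalMinorsNeZero (specRad B • 1 - B) := by
  -- The moduli of a null vector of a proper principal block, extended by zero, would form a
  -- nonnegative `y` with `ρ(B) y ≤ B y` vanishing somewhere, which irreducibility forbids.
  intro s hs hdet
  obtain ⟨i₀, -, hi₀⟩ := Finset.exists_of_ssubset (Finset.ssubset_univ_iff.2 hs)
  have : NeZero m := ⟨i₀.pos.ne'⟩
  obtain ⟨x, hx0, hx⟩ := exists_mulVec_eq_zero_iff.2 hdet
  let v : Fin m → ℝ := fun i => if h : i ∈ s then x ⟨i, h⟩ else 0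
  have hv : ∀ i ∉ s, v i = 0 := fun i hi => dif_neg hi
  have hvx : v ∘ ((↑) : s → Fin m) = x := funext fun j => dif_pos j.2
  have hBv : ∀ i ∈ s, (B.map (algebraMap ℝ ℝ) *ᵥ v) i = specRad B * v i := fun i hi => by
    have := submatrix_mulVec_comp_coe (specRad B • 1 - B) hv ⟨i, hi⟩
    rw [hvx, hx, sub_mulVec, smul_mulVec, one_mulVec, Pi.zero_apply, eq_comm, Pi.sub_apply,
      sub_eq_zero] at this
    simpa using this.symm
  let y : Fin m → ℝ := fun i => ‖v i‖
  have hy : 0 ≤ y := fun i => norm_nonneg _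
  have hy0 : y ≠ 0 := by
    obtain ⟨j, hj⟩ := Function.ne_iff.1 hx0
    exact Function.ne_iff.2 ⟨j, by simpa [y, v] using hj⟩
  have hρy : specRad B • y ≤ B *ᵥ y := fun i => by
    by_cases hi : i ∈ s
    · have := norm_mul_norm_le_mulVec_norm hB (hBv i hi)
      rwa [Real.norm_of_nonneg (specRad_nonneg B)] at this
    · show specRad B * ‖v i‖ ≤ (B *ᵥ y) i
      rw [hv i hi, norm_zero, mul_zero]
      exact dotProduct_nonneg_of_nonneg (fun j => hB i j) hy
  have := pos_of_mulVec_eq_smul hB hirr hy hy0 (specRad_nonneg B)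
    (mulVec_eq_specRad_smul_of_le hB hirr hy hy0 hρy) i₀
  simp [y, hv i₀ hi₀] at this

end PerronFrobenius

section FSAI

variable {n : ℕ} {A L U : Matrix (Fin n) (Fin n) ℝ} {S : Set (Fin n × Fin n)}

theorem IsFSAIUpperFactor.transpose (hU : IsFSAIUpperFactor A U S) :
    IsFSAILowerFactor Aᵀ Uᵀ (Prod.swap ⁻¹' S) := by
  refine ⟨fun i j h => hU.1 j i h, fun x hx => hU.2.1 x.swap hx, fun x hx => ?_⟩
  rw [← transpose_mul, transpose_apply]
  exact (hU.2.2 x.swap hx).trans (by simp [eq_comm])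

theorem IsLowerTri.isUnit (hL : IsLowerTri L) (hd : ∀ i, L i i ≠ 0) : IsUnit L :=
  (isUnit_iff_isUnit_det L).2 <| by
    rw [det_of_isLowerTriangular L hL]
    exact (Finset.prod_ne_zero_iff.2 fun i _ => hd i).isUnit

theorem IsFSAILowerFactor.apply_self_ne_zero (hL : IsFSAILowerFactor A L S)
    (hA : ProperPrincipalMinorsNeZero A) {i : Fin n} (hi : (i, i) ∈ S) : L i i ≠ 0 := by
  -- If `L i i = 0`, row `i` of `L` lives on `s` and `(L * A) i` vanishes on `s`.
  classical
  intro hLii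
  let s := Finset.univ.filter fun t => t ≠ i ∧ (i, t) ∈ S
  have hs : s ≠ Finset.univ := (ne_of_mem_of_not_mem' (Finset.mem_univ i) (by simp [s])).symm
  have hrow : L i = 0 := by
    refine eq_zero_of_vecMul_eq_zero_on (hA s hs) (fun t ht => ?_) (fun j hj => ?_)
    · by_cases hti : t = i
      · rwa [hti]
      · exact hL.2.1 (i, t) fun hit => ht (by simp [s, hti, hit])
    · simp only [s, Finset.mem_filter] at hj
      exact (hL.2.2 (i, j) hj.2.2).trans (if_neg (Ne.symm hj.2.1))
  have := hL.2.2 (i, i) hi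
  simp [mul_apply, hrow] at this

theorem mul_mul_apply_self_of_isLowerTri (hL : IsLowerTri L) (hU : IsFSAIUpperFactor A U S)
    {i : Fin n} (hS : ∀ t ≤ i, (t, i) ∈ S) : (L * A * U) i i = L i i := by
  rw [Matrix.mul_assoc, mul_apply, Fintype.sum_eq_single i fun t hti => ?_,
    hU.2.2 (i, i) (hS i le_rfl), if_pos rfl, mul_one]
  rcases lt_or_gt_of_ne hti with hti | hit
  · rw [hU.2.2 (t, i) (hS t hti.le), if_neg hti.ne, mul_zero]
  · rw [hL i t hit, zero_mul]

theorem IsFSAILowerFactor.mul_mul_apply_eq_zero (hL : IsFSAILowerFactor A L S) (hU : IsUpperTri U)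
    {i j : Fin n} (hji : j < i) (hS : ∀ t ≤ j, (i, t) ∈ S) : (L * A * U) i j = 0 := by
  rw [mul_apply]
  refine Finset.sum_eq_zero fun t _ => ?_
  rcases le_or_gt t j with htj | hjt
  · rw [hL.2.2 (i, t) (hS t htj), if_neg (htj.trans_lt hji).ne', zero_mul]
  · rw [hU t j hjt, mul_zero]

theorem IsFSAILowerFactor.mul_mul_apply_eq_zero_of_ne {p q : Fin n} (hqp : (q : ℕ) + 1 = p)
    (hL : IsFSAILowerFactor A L ({x | x.2 ≤ x.1} \ {(p, q)})) (hU : IsUpperTri U) {i j : Fin n}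
    (hji : j < i) (hne : s(i, j) ≠ s(p, q)) : (L * A * U) i j = 0 := by
  refine hL.mul_mul_apply_eq_zero hU hji fun t htj => ⟨htj.trans hji.le, fun h => hne ?_⟩
  simp only [Set.mem_singleton_iff, Prod.mk.injEq] at h
  obtain ⟨rfl, rfl⟩ := h
  rw [Fin.lt_def] at hji
  rw [Fin.le_def] at htj
  rw [show j = t from Fin.ext (by omega)]

theorem isDiagonalBut_mul_mul {p q : Fin n} (hqp : (q : ℕ) + 1 = p)
    (hL : IsFSAILowerFactor A L ({x | x.2 ≤ x.1} \ {(p, q)}))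
    (hU : IsFSAIUpperFactor A U ({x | x.1 ≤ x.2} \ {(q, p)})) :
    IsDiagonalBut (L * A * U) p q := by
  intro i j hij hne
  rcases lt_or_gt_of_ne hij with hij | hji
  · have hpattern : Prod.swap ⁻¹' ({x : Fin n × Fin n | x.1 ≤ x.2} \ {(q, p)}) =
        {x | x.2 ≤ x.1} \ {(p, q)} := by
      ext ⟨a, b⟩
      simp only [Set.mem_preimage, Prod.swap_prod_mk, Set.mem_sdiff, Set.mem_ofPred_eq,
        Set.mem_singleton_iff, Prod.mk.injEq]
      tauto
    have hUt := hpattern ▸ hU.transpose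
    rw [← transpose_apply (L * A * U), transpose_mul, transpose_mul, ← Matrix.mul_assoc]
    exact hUt.mul_mul_apply_eq_zero_of_ne hqp (fun a b h => hL.1 b a h) hij
      (by rwa [Sym2.eq_swap])
  · exact hL.mul_mul_apply_eq_zero_of_ne hqp hU.1 hji hne

end FSAI

theorem fsai_one_two_inverse (n : ℕ) (hn : 2 ≤ n)
    (A : Matrix (Fin n) (Fin n) ℝ)
    (hA : IsSingularMMatrix A) (hirr : IsIrreducibleMatrix A)
    (L U : Matrix (Fin n) (Fin n) ℝ)
    (hL : IsFSAILowerFactor A L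
      ({p : Fin n × Fin n | p.2 ≤ p.1} \
        {((⟨n - 1, by omega⟩ : Fin n), (⟨n - 2, by omega⟩ : Fin n))}))
    (hU : IsFSAIUpperFactor A U
      ({p : Fin n × Fin n | p.1 ≤ p.2} \
        {((⟨n - 2, by omega⟩ : Fin n), (⟨n - 1, by omega⟩ : Fin n))}))
    (Dm : Matrix (Fin n) (Fin n) ℝ)
    (hDm : Dm = Matrix.diagonal (fun i : Fin n =>
      if i = (⟨n - 1, by omega⟩ : Fin n) then 0 else ((L * A * U) i i)⁻¹))
    (Ahat : Matrix (Fin n) (Fin n) ℝ)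
    (hAhat : Ahat = U * Dm * L) :
    A * Ahat * A = A ∧ Ahat * A * Ahat = Ahat := by
  obtain ⟨-, B, hB, hAB⟩ := hA
  have : NeZero n := ⟨by omega⟩
  have hirrB : IsIrreducibleMatrix B := (hAB ▸ hirr).mono fun i j hij h => by simpa [hij] using h
  have hminors : ProperPrincipalMinorsNeZero A :=
    hAB ▸ properPrincipalMinorsNeZero_specRad_smul_one_sub hB hirrB
  have hdetA : A.det = 0 := hAB ▸ det_specRad_smul_one_sub_eq_zero hB hirrB
  set p : Fin n := ⟨n - 1, by omega⟩
  set q : Fin n := ⟨n - 2, by omega⟩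
  have hpq : p ≠ q := Fin.ne_of_val_ne (show n - 1 ≠ n - 2 by omega)
  set M := L * A * U
  have hM : IsDiagonalBut M p q := isDiagonalBut_mul_mul (show n - 2 + 1 = n - 1 by omega) hL hU
  have hLd : ∀ i, L i i ≠ 0 := fun i => hL.apply_self_ne_zero hminors
    ⟨le_refl i, fun h => hpq ((Prod.ext_iff.1 h).1.symm.trans (Prod.ext_iff.1 h).2)⟩
  have hUd : ∀ i, U i i ≠ 0 := fun i => hU.transpose.apply_self_ne_zero hminors.transpose
    ⟨le_refl i, fun h => hpq ((Prod.ext_iff.1 h).2.symm.trans (Prod.ext_iff.1 h).1)⟩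
  have hMd : ∀ i ≠ p, M i i ≠ 0 := fun i hi =>
    (mul_mul_apply_self_of_isLowerTri hL.1 hU fun t hti => ⟨hti, by simp [hi]⟩).trans_ne (hLd i)
  have hdetM : M.det = 0 := by simp [M, det_mul, hdetA]
  have hD : Dm = diagInvExcept M p := hDm
  have hMDM := hM.mul_diagInvExcept_mul_self hpq hMd (hM.mul_eq_mul_of_det_eq_zero hpq hMd hdetM)
  have hDMD := hM.diagInvExcept_mul_mul_diagInvExcept
  rw [← hD] at hMDM hDMD
  have hLu : IsUnit L := hL.1.isUnit hLd
  have hUu : IsUnit U := (isUnit_transpose U).1 (hU.transpose.1.isUnit hUd)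
  constructor
  · refine hLu.mul_left_cancel (hUu.mul_right_cancel ?_)
    simpa only [hAhat, M, Matrix.mul_assoc] using hMDM
  · calc Ahat * A * Ahat = U * (Dm * M * Dm) * L := by simp only [hAhat, M, Matrix.mul_assoc]
      _ = Ahat := by rw [hDMD, hAhat]
end

section
/- Let n ≥ 1 and let A be a real n×n singular irreducible M-matrix with columns a_1, …, a_n. Then there is no vector l ∈ ℝ^n with l^T a_j = 0 for all j = 1, …, n−1 and l^T a_n = 1. Consequently, no lower triangular matrix L exists with (L A)_{ij} = δ_{ij} for all pairs (i,j) with i ≥ j, i.e., the FSAI construction with the full lower triangular pattern {(i,j) : i ≥ j} is impossible for singular irreducible M-matrices. -/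
open Matrix

/-!
Write `A = ρ • 1 - B` with `B ≥ 0` and `ρ = ρ(B)`. The moduli of an eigenvector of `B` for an
eigenvalue of modulus `ρ` form a vector `w ≥ 0`, `w ≠ 0` with `ρ • w ≤ B *ᵥ w`. Irreducibility
makes `P = (1 + B) ^ M` entrywise positive for large `M`, and `P` commutes with `B`. If
`B *ᵥ w ≠ ρ • w`, then `z = P *ᵥ w > 0` satisfies `B *ᵥ z - ρ • z = P *ᵥ (B *ᵥ w - ρ • w) > 0`,
hence `c • z ≤ B *ᵥ z` for some `c > ρ`; iterating gives `‖B ^ m‖ ≥ K * c ^ m` with `K > 0`,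
against Gelfand's formula. So `B *ᵥ w = ρ • w`, and `P *ᵥ w = (1 + ρ) ^ M • w > 0` forces `w > 0`.
Finally, a row vector `l` with `l ᵥ* A = Pi.single k 1` would give `w k = l ⬝ᵥ (A *ᵥ w) = 0`,
and the last row of an FSAI factor `L` would be such an `l`.
-/

open Filter Topology Relation

theorem ofReal_le_spectralRadius_of_mul_pow_le_norm_pow {A : Type*} [NormedRing A]
    [NormedAlgebra ℂ A] [CompleteSpace A] (a : A) {K c : ℝ} (hK : 0 < K) (hc : 0 ≤ c)
    (h : ∀ m : ℕ, K * c ^ m ≤ ‖a ^ m‖) :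
    ENNReal.ofReal c ≤ spectralRadius ℂ a := by
  have hK_root : Tendsto (fun m : ℕ => K ^ (1 / m : ℝ)) atTop (𝓝 1) := by
    simpa using tendsto_const_nhds.rpow tendsto_one_div_atTop_nhds_zero_nat (Or.inl hK.ne')
  have hlow : Tendsto (fun m : ℕ => ENNReal.ofReal (K ^ (1 / m : ℝ) * c)) atTop
      (𝓝 (ENNReal.ofReal c)) := by
    simpa using ENNReal.tendsto_ofReal (hK_root.mul_const c)
  refine le_of_tendsto_of_tendsto hlow
    (spectrum.pow_norm_pow_one_div_tendsto_nhds_spectralRadius a) ?_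
  filter_upwards [eventually_ne_atTop 0] with m hm
  refine ENNReal.ofReal_le_ofReal ?_
  calc K ^ (1 / m : ℝ) * c = (K * c ^ m) ^ (1 / m : ℝ) := by
        rw [Real.mul_rpow hK.le (by positivity), one_div, Real.pow_rpow_inv_natCast hc hm]
    _ ≤ ‖a ^ m‖ ^ (1 / m : ℝ) := Real.rpow_le_rpow (by positivity) (h m) (by positivity)

theorem exists_gt_forall_mul_lt {ι : Type*} [Finite ι] {a : ℝ} {z y : ι → ℝ}
    (h : ∀ i, a * z i < y i) : ∃ c > a, ∀ i, c * z i < y i := by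
  have hnhds : ∀ᶠ c in 𝓝 a, ∀ i, c * z i < y i := eventually_all.2 fun i =>
    (continuous_id.mul continuous_const).continuousAt.eventually_lt continuousAt_const (h i)
  obtain ⟨c, hc, hca⟩ :=
    ((hnhds.filter_mono nhdsWithin_le_nhds).and self_mem_nhdsWithin).exists (f := 𝓝[>] a)
  exact ⟨c, hca, hc⟩

namespace Matrix

theorem vecMul_apply_eq_zero_of_mulVec_eq_zero {m n R : Type*} [Fintype m] [Fintype n]
    [CommRing R] [IsDomain R] {A : Matrix m n R} {w : n → R} (hw : A *ᵥ w = 0) {k : n}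
    (hk : w k ≠ 0) {l : m → R} (hl : ∀ j, j ≠ k → (l ᵥ* A) j = 0) : (l ᵥ* A) k = 0 := by
  have hdot : (l ᵥ* A) ⬝ᵥ w = (l ᵥ* A) k * w k :=
    Finset.sum_eq_single k (fun j _ hj => by rw [hl j hj, zero_mul]) (by simp)
  rw [← dotProduct_mulVec, hw, dotProduct_zero] at hdot
  exact (mul_eq_zero.1 hdot.symm).resolve_right hk

theorem one_add_apply_nonneg {ι : Type*} [DecidableEq ι] {B : Matrix ι ι ℝ}
    (hB : ∀ i j, 0 ≤ B i j) (i j : ι) : 0 ≤ (1 + B) i j :=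
  add_nonneg (zero_le_one_elem i j) (hB i j)

section Nonneg

variable {m ι : Type*} [Fintype ι]

theorem mulVec_mono_of_nonneg {B : Matrix m ι ℝ} (hB : ∀ i j, 0 ≤ B i j) {x y : ι → ℝ}
    (h : x ≤ y) : B *ᵥ x ≤ B *ᵥ y := fun i =>
  Finset.sum_le_sum fun j _ => mul_le_mul_of_nonneg_left (h j) (hB i j)

theorem mulVec_pos_of_forall_pos {P : Matrix m ι ℝ} (hP : ∀ i j, 0 < P i j) {x : ι → ℝ}
    (hx : 0 ≤ x) (hx0 : x ≠ 0) (i : m) : 0 < (P *ᵥ x) i := by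
  obtain ⟨j, hj⟩ := Function.ne_iff.1 hx0
  exact Finset.sum_pos' (fun k _ => mul_nonneg (hP i k).le (hx k))
    ⟨j, Finset.mem_univ _, mul_pos (hP i j) ((hx j).lt_of_ne' hj)⟩

variable [DecidableEq ι] {B : Matrix ι ι ℝ}

theorem pow_smul_le_pow_mulVec (hB : ∀ i j, 0 ≤ B i j) {c : ℝ} (hc : 0 ≤ c) {z : ι → ℝ}
    (h : c • z ≤ B *ᵥ z) (k : ℕ) : c ^ k • z ≤ (B ^ k) *ᵥ z := by
  induction k with
  | zero => simp
  | succ k ih =>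
    calc c ^ (k + 1) • z = c ^ k • (c • z) := by rw [pow_succ, mul_smul]
      _ ≤ c ^ k • (B *ᵥ z) := smul_le_smul_of_nonneg_left h (pow_nonneg hc k)
      _ = B *ᵥ (c ^ k • z) := (mulVec_smul ..).symm
      _ ≤ B *ᵥ ((B ^ k) *ᵥ z) := mulVec_mono_of_nonneg hB ih
      _ = (B ^ (k + 1)) *ᵥ z := by rw [mulVec_mulVec, pow_succ']

theorem pow_one_add_apply_mono (hB : ∀ i j, 0 ≤ B i j) (i j : ι) :
    Monotone fun m : ℕ => ((1 + B) ^ m) i j :=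
  monotone_nat_of_le_succ fun m => by
    rw [pow_succ, mul_add, mul_one, add_apply]
    exact le_add_of_nonneg_right <| Finset.sum_nonneg fun k _ =>
      mul_nonneg (pow_apply_nonneg (one_add_apply_nonneg hB) m i k) (hB k j)

theorem exists_pow_one_add_apply_pos (hB : ∀ i j, 0 ≤ B i j) {i j : ι}
    (h : ReflTransGen (fun a b => 0 < B a b) i j) : ∃ m : ℕ, 0 < ((1 + B) ^ m) i j := by
  induction h with
  | refl => exact ⟨0, by simp⟩
  | @tail b c _ hbc ih =>
    obtain ⟨m, hm⟩ := ih
    refine ⟨m + 1, ?_⟩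
    rw [pow_succ, mul_apply]
    calc 0 < ((1 + B) ^ m) i b * (1 + B) b c :=
          mul_pos hm (hbc.trans_le (le_add_of_nonneg_left (zero_le_one_elem b c)))
      _ ≤ ∑ k, ((1 + B) ^ m) i k * (1 + B) k c :=
          Finset.single_le_sum (fun k _ => mul_nonneg
            (pow_apply_nonneg (one_add_apply_nonneg hB) m i k) (one_add_apply_nonneg hB k c))
            (Finset.mem_univ b)

theorem exists_pow_one_add_pos (hB : ∀ i j, 0 ≤ B i j)
    (hirr : ∀ i j, ReflTransGen (fun a b => 0 < B a b) i j) :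
    ∃ M : ℕ, ∀ i j, 0 < ((1 + B) ^ M) i j := by
  choose m hm using fun i j => exists_pow_one_add_apply_pos hB (hirr i j)
  let f : ι × ι → ℕ := fun p => m p.1 p.2
  exact ⟨Finset.univ.sup f, fun i j => (hm i j).trans_le
    (pow_one_add_apply_mono hB i j (Finset.le_sup (f := f) (Finset.mem_univ (i, j))))⟩

end Nonneg

theorem pow_mulVec_of_mulVec_eq_smul {ι R : Type*} [Fintype ι] [DecidableEq ι] [CommRing R]
    {B : Matrix ι ι R} {w : ι → R} {s : R} (h : B *ᵥ w = s • w) (m : ℕ) :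
    (B ^ m) *ᵥ w = s ^ m • w := by
  induction m with
  | zero => simp
  | succ m ih => rw [pow_succ, ← mulVec_mulVec, h, mulVec_smul, ih, smul_smul, pow_succ']

section SpectralRadius

variable {n : ℕ} (B : Matrix (Fin n) (Fin n) ℝ)

attribute [local instance] Matrix.linftyOpNormedRing Matrix.linftyOpNormedAlgebra

theorem finite_norm_image_spectrum :
    ((fun z : ℂ => ‖z‖) '' spectrum ℂ (B.map Complex.ofReal)).Finite :=
  (B.map Complex.ofReal).finite_spectrum.image _

theorem norm_le_specRad {μ : ℂ} (hμ : μ ∈ spectrum ℂ (B.map Complex.ofReal)) :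
    ‖μ‖ ≤ specRad B :=
  le_csSup (finite_norm_image_spectrum B).bddAbove ⟨μ, hμ, rfl⟩

theorem exists_mem_spectrum_norm_eq_specRad [NeZero n] :
    ∃ μ ∈ spectrum ℂ (B.map Complex.ofReal), ‖μ‖ = specRad B :=
  ((spectrum.nonempty _).image _).csSup_mem (finite_norm_image_spectrum B)

theorem specRad_nonneg [NeZero n] : 0 ≤ specRad B := by
  obtain ⟨μ, -, hμ⟩ := exists_mem_spectrum_norm_eq_specRad B
  exact hμ ▸ norm_nonneg μ

theorem spectralRadius_map_ofReal_le :
    spectralRadius ℂ (B.map Complex.ofReal) ≤ ENNReal.ofReal (specRad B) :=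
  iSup₂_le fun μ hμ => by
    rw [← ENNReal.ofReal_coe_nnreal, coe_nnnorm]
    exact ENNReal.ofReal_le_ofReal (norm_le_specRad B hμ)

theorem norm_map_ofReal : ‖B.map Complex.ofReal‖ = ‖B‖ := by
  simp [linfty_opNorm_def]

theorem map_ofReal_pow (m : ℕ) : (B.map Complex.ofReal) ^ m = (B ^ m).map Complex.ofReal :=
  (map_pow Complex.ofRealHom.mapMatrix B m).symm

variable {B}

theorem exists_nonneg_specRad_smul_le_mulVec [NeZero n] (hB : ∀ i j, 0 ≤ B i j) :
    ∃ w : Fin n → ℝ, 0 ≤ w ∧ w ≠ 0 ∧ specRad B • w ≤ B *ᵥ w := by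
  obtain ⟨μ, hμ, hμρ⟩ := exists_mem_spectrum_norm_eq_specRad B
  rw [← spectrum_toLin', ← Module.End.hasEigenvalue_iff_mem_spectrum] at hμ
  obtain ⟨v, hv⟩ := hμ.exists_hasEigenvector
  have hBv : (B.map Complex.ofReal) *ᵥ v = μ • v := hv.apply_eq_smul
  refine ⟨fun i => ‖v i‖, fun i => norm_nonneg _, fun h => hv.2 (funext fun i => ?_),
    fun i => ?_⟩
  · simpa using congrFun h i
  · calc specRad B * ‖v i‖ = ‖((B.map Complex.ofReal) *ᵥ v) i‖ := by
          rw [hBv, Pi.smul_apply, smul_eq_mul, norm_mul, hμρ]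
      _ ≤ ∑ j, ‖(B i j : ℂ) * v j‖ := norm_sum_le Finset.univ fun j => (B i j : ℂ) * v j
      _ = (B *ᵥ fun i => ‖v i‖) i := by
          simp only [norm_mul, Complex.norm_real, Real.norm_eq_abs, abs_of_nonneg (hB _ _)]
          rfl

theorem le_specRad_of_smul_le_mulVec [NeZero n] (hB : ∀ i j, 0 ≤ B i j) {c : ℝ}
    {z : Fin n → ℝ} (hz : ∀ i, 0 < z i) (h : c • z ≤ B *ᵥ z) : c ≤ specRad B := by
  rcases le_or_gt c 0 with hc | hc
  · exact hc.trans (specRad_nonneg B)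
  have hz_norm : 0 < ‖z‖ := (hz 0).trans_le ((le_abs_self _).trans (norm_le_pi_norm z 0))
  have hpow : ∀ m : ℕ, z 0 / ‖z‖ * c ^ m ≤ ‖(B.map Complex.ofReal) ^ m‖ := fun m => by
    rw [map_ofReal_pow, norm_map_ofReal, div_mul_eq_mul_div, div_le_iff₀ hz_norm]
    calc z 0 * c ^ m = (c ^ m • z) 0 := mul_comm _ _
      _ ≤ ((B ^ m) *ᵥ z) 0 := pow_smul_le_pow_mulVec hB hc.le h m 0
      _ ≤ ‖(B ^ m) *ᵥ z‖ := (le_abs_self _).trans (norm_le_pi_norm ((B ^ m) *ᵥ z) 0)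
      _ ≤ ‖B ^ m‖ * ‖z‖ := linfty_opNorm_mulVec _ _
  have := (ofReal_le_spectralRadius_of_mul_pow_le_norm_pow _ (div_pos (hz 0) hz_norm) hc.le
    hpow).trans (spectralRadius_map_ofReal_le B)
  exact (ENNReal.ofReal_le_ofReal_iff (specRad_nonneg B)).1 this

end SpectralRadius

theorem exists_pos_mulVec_eq_specRad_smul {n : ℕ} [NeZero n] {B : Matrix (Fin n) (Fin n) ℝ}
    (hB : ∀ i j, 0 ≤ B i j) (hirr : ∀ i j, ReflTransGen (fun a b => 0 < B a b) i j) :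
    ∃ w : Fin n → ℝ, (∀ i, 0 < w i) ∧ B *ᵥ w = specRad B • w := by
  obtain ⟨w, hw_nonneg, hw_ne, hsub⟩ := exists_nonneg_specRad_smul_le_mulVec hB
  obtain ⟨M, hM⟩ := exists_pow_one_add_pos hB hirr
  set P := (1 + B) ^ M
  have hPw := mulVec_pos_of_forall_pos hM hw_nonneg hw_ne
  have hBw : B *ᵥ w = specRad B • w := by
    by_contra hne
    have hPu := mulVec_pos_of_forall_pos hM (sub_nonneg.2 hsub) (sub_ne_zero.2 hne)
    have hPB : P * B = B * P := (((Commute.one_left B).add_left (Commute.refl B)).pow_left M).eq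
    rw [mulVec_sub, mulVec_mulVec, hPB, ← mulVec_mulVec, mulVec_smul] at hPu
    obtain ⟨c, hc, hcz⟩ := exists_gt_forall_mul_lt fun i => sub_pos.1 (hPu i)
    exact (le_specRad_of_smul_le_mulVec hB hPw fun i => (hcz i).le).not_gt hc
  have hPw_eq : P *ᵥ w = (1 + specRad B) ^ M • w := by
    refine pow_mulVec_of_mulVec_eq_smul ?_ M
    rw [add_mulVec, one_mulVec, hBw, add_smul, one_smul]
  refine ⟨w, fun i => (hw_nonneg i).lt_of_ne' ?_, hBw⟩
  have := (hPw i).ne'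
  rw [hPw_eq, Pi.smul_apply, smul_eq_mul] at this
  exact right_ne_zero_of_mul this

end Matrix

theorem IsIrreducibleMatrix.reflTransGen_pos {n : ℕ} {s : ℝ} {B : Matrix (Fin n) (Fin n) ℝ}
    (hirr : IsIrreducibleMatrix (s • 1 - B)) (hB : ∀ i j, 0 ≤ B i j) (i j : Fin n) :
    ReflTransGen (fun a b => 0 < B a b) i j :=
  (hirr i j).lift' id fun a b hab => by
    rcases eq_or_ne a b with rfl | hne
    · exact .refl
    · exact .single ((hB a b).lt_of_ne' (by simpa [one_apply_ne hne] using hab))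

theorem fsai_full_pattern_impossible (n : ℕ) (hn : 1 ≤ n)
    (A : Matrix (Fin n) (Fin n) ℝ)
    (hA : IsSingularMMatrix A) (hirr : IsIrreducibleMatrix A) :
    (¬ ∃ l : Fin n → ℝ,
        (∀ j : Fin n, j ≠ (⟨n - 1, by omega⟩ : Fin n) → ∑ i, l i * A i j = 0) ∧
        ∑ i, l i * A i (⟨n - 1, by omega⟩ : Fin n) = 1) ∧
    ¬ ∃ L : Matrix (Fin n) (Fin n) ℝ, IsLowerTri L ∧
        ∀ i j : Fin n, j ≤ i → (L * A) i j = if i = j then 1 else 0 := by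
  obtain ⟨-, B, hB, rfl⟩ := hA
  have : NeZero n := ⟨by omega⟩
  obtain ⟨w, hw, hBw⟩ := exists_pos_mulVec_eq_specRad_smul hB (hirr.reflTransGen_pos hB)
  have hAw : (specRad B • 1 - B) *ᵥ w = 0 := by
    rw [sub_mulVec, smul_mulVec, one_mulVec, hBw, sub_self]
  set k : Fin n := ⟨n - 1, by omega⟩
  have hrow : ¬ ∃ l : Fin n → ℝ, (∀ j, j ≠ k → ∑ i, l i * (specRad B • 1 - B) i j = 0) ∧
      ∑ i, l i * (specRad B • 1 - B) i k = 1 := fun ⟨l, hoff, hk⟩ =>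
    one_ne_zero (hk.symm.trans (vecMul_apply_eq_zero_of_mulVec_eq_zero hAw (hw k).ne' hoff))
  refine ⟨hrow, ?_⟩
  rintro ⟨L, -, hLA⟩
  refine hrow ⟨L k, fun j hj => ?_, ?_⟩
  · simpa [mul_apply, Ne.symm hj] using hLA k j (Fin.le_def.2 (by simp [k]; omega))
  · simpa [mul_apply] using hLA k k le_rfl
end
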